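/- Let R be a symmetric endomorphism of Λ²V all of whose eigenvalues lie in the interval [γ₀, γ₁]. Then for every integer p with 1 ≤ p ≤ q−1 and every p-form ω, p(q−p)γ₀|ω|² ≤ ⟨B_R^{[p]}ω, ω⟩ ≤ p(q−p)γ₁|ω|². -/

import Mathlib

/-!
For a basis bivector `ψ = e_a ∧ e_b = e_a · e_b` and a basis monomial `e_t`, moving `e_a` and `e_b`
past `e_t` in the Clifford algebra gives `e_t · ψ = (-1)^{|{a,b} ∩ t|} ψ · e_t`. Hence
`[ψ, ω] = ψ · ω'` with `ω'_t = (1 - (-1)^{|{a,b} ∩ t|}) ω_t`, and since Clifford multiplication by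
a unit vector is an isometry, `|[ψ, ω]|² = 4 Σ_{|{a,b} ∩ t| = 1} ω_t²`. Each `p`-subset `t` is split
by exactly `p (q - p)` pairs, so `Σ_ψ |[ψ, ω]|² = 4 p (q - p) |ω|²`.

On the other hand `⟨B_R ω, ω⟩ = ¼ Σ_u x_uᵀ A x_u`, where `A` is the symmetric matrix of `R` on
`Λ²V` and `x_u = ([ψ, ω]_u)_ψ`. Every eigenvector of `A` is an eigenvector of `R`, so
`γ₀ |x_u|² ≤ x_uᵀ A x_u ≤ γ₁ |x_u|²`; summing over `u` gives the claim.
-/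

open scoped BigOperators

namespace Paper

noncomputable section

/-- Coefficients of exterior forms w.r.t. the fixed orthonormal basis `e₁,…,e_q` of `V = ℝ^q`:
a form is identified with its family of coefficients indexed by subsets of `Fin q`. -/
abbrev Ext (q : ℕ) := Finset (Fin q) → ℝ

variable {q : ℕ}

/-- `(-1)^{#{j ∈ s | j < i}}` -/
def sgn (i : Fin q) (s : Finset (Fin q)) : ℝ := (-1 : ℝ) ^ (s.filter fun j => j < i).card

/-- Exterior multiplication by the basis vector `e_i`. -/
def wB (i : Fin q) (ω : Ext q) : Ext q := fun s =>
  if i ∈ s then sgn i (s.erase i) * ω (s.erase i) else 0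

/-- Interior product (contraction) with the basis vector `e_i`. -/
def iB (i : Fin q) (ω : Ext q) : Ext q := fun s =>
  if i ∈ s then 0 else sgn i s * ω (insert i s)

/-- The basis monomial `e_{i₁} ∧ ⋯ ∧ e_{i_p}`, for `s = {i₁ < ⋯ < i_p}`. -/
def bF (s : Finset (Fin q)) : Ext q := fun t => if t = s then 1 else 0

/-- The basis vector `e_i` of `V = ℝ^q`. -/
def eB (i : Fin q) : Fin q → ℝ := Pi.single i 1

/-- Exterior multiplication by the vector `X ∈ V`. -/
def wV (X : Fin q → ℝ) (ω : Ext q) : Ext q := ∑ i, X i • wB i ω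

/-- Interior product with the vector `X ∈ V`. -/
def iV (X : Fin q → ℝ) (ω : Ext q) : Ext q := ∑ i, X i • iB i ω

/-- Clifford multiplication `X · ω = X ∧ ω − X ⌟ ω` of a vector with a form. -/
def clV (X : Fin q → ℝ) (ω : Ext q) : Ext q := wV X ω - iV X ω

/-- Clifford multiplication `e_{i₁} · e_{i₂} ⋯ e_{i_p} · ω` for `s = {i₁ < ⋯ < i_p}`. -/
def clB (s : Finset (Fin q)) (ω : Ext q) : Ext q :=
  (Finset.sort s (· ≤ ·)).foldr (fun i τ => clV (eB i) τ) ω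

/-- Clifford multiplication of two forms. -/
def clM (ω₁ ω₂ : Ext q) : Ext q := ∑ s : Finset (Fin q), ω₁ s • clB s ω₂

/-- The bracket `[ω₁, ω₂] = ω₁ · ω₂ − ω₂ · ω₁`. -/
def brkt (ω₁ ω₂ : Ext q) : Ext q := clM ω₁ ω₂ - clM ω₂ ω₁

/-- Exterior multiplication by the monomial `e_{i₁} ∧ ⋯ ∧ e_{i_p}`. -/
def wBs (s : Finset (Fin q)) (ω : Ext q) : Ext q :=
  (Finset.sort s (· ≤ ·)).foldr (fun i τ => wB i τ) ω

/-- The wedge product of two forms. -/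
def wM (ω₁ ω₂ : Ext q) : Ext q := ∑ s : Finset (Fin q), ω₁ s • wBs s ω₂

/-- The inner product on forms, for which the basis monomials are orthonormal. -/
def ip (ω φ : Ext q) : ℝ := ∑ s : Finset (Fin q), ω s * φ s

/-- `ω` is a form of (pure) degree `p`. -/
def homog (p : ℕ) (ω : Ext q) : Prop := ∀ s : Finset (Fin q), s.card ≠ p → ω s = 0

/-- The inner product of two vectors of `V = ℝ^q`. -/
def dotP (X Y : Fin q → ℝ) : ℝ := ∑ i, X i * Y i

/-- A vector of `V` regarded as a 1-form. -/
def oneF (X : Fin q → ℝ) : Ext q := ∑ i, X i • bF {i}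

/-- The wedge `X ∧ Y` of two vectors. -/
def w2 (X Y : Fin q → ℝ) : Ext q := wV X (oneF Y)

/-- Two-element subsets, indexing the canonical orthonormal basis of `Λ²V`. -/
def twoSets (q : ℕ) : Finset (Finset (Fin q)) := Finset.univ.filter fun s => s.card = 2

/-- The Bochner operator quadratic form `⟨B_R^{[p]} ω, φ⟩ =
(1/4) Σ_{r,s} ⟨R ψ_r, ψ_s⟩ ⟨[ψ_r,ω],[ψ_s,φ]⟩`, computed in the canonical
orthonormal basis `{e_i ∧ e_j}_{i<j}` of `Λ²V`. -/
def Bform (R : Ext q →ₗ[ℝ] Ext q) (ω φ : Ext q) : ℝ :=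
  (1 / 4 : ℝ) * ∑ s ∈ twoSets q, ∑ t ∈ twoSets q,
    ip (R (bF s)) (bF t) * ip (brkt (bF s) ω) (brkt (bF t) φ)

open scoped symmDiff Matrix

lemma mem_twoSets {s : Finset (Fin q)} : s ∈ twoSets q ↔ s.card = 2 := by
  simp [twoSets]

lemma ip_comm (φ ψ : Ext q) : ip φ ψ = ip ψ φ :=
  Finset.sum_congr rfl fun _ _ => mul_comm _ _

lemma ip_bF (φ : Ext q) (s : Finset (Fin q)) : ip φ (bF s) = φ s := by
  simp [ip, bF]

lemma sum_smul_bF (c : Ext q) : ∑ t, c t • bF t = c := by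
  ext s
  simp [bF]

lemma sgn_mul_self (i : Fin q) (s : Finset (Fin q)) : sgn i s * sgn i s = 1 := by
  rw [sgn, ← pow_add, ← two_mul, pow_mul]; norm_num

lemma single_symmDiff (i : Fin q) (s : Finset (Fin q)) :
    {i} ∆ s = if i ∈ s then s.erase i else insert i s := by
  split_ifs with h <;> ext j <;> by_cases hj : j = i <;> simp [Finset.mem_symmDiff, *]

lemma sgn_single_symmDiff (i j : Fin q) (s : Finset (Fin q)) :
    sgn i ({j} ∆ s) = (if j < i then -1 else 1) * sgn i s := by
  have key : ∀ t, j ∉ t → sgn i (insert j t) = (if j < i then -1 else 1) * sgn i t := by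
    intro t hj
    unfold sgn
    rw [Finset.filter_insert]
    split_ifs
    · rw [Finset.card_insert_of_notMem (by simp [hj]), pow_succ, mul_comm]
    · rw [one_mul]
  rw [single_symmDiff]
  by_cases hs : j ∈ s
  · rw [if_pos hs, ← Finset.insert_erase hs, key _ (Finset.notMem_erase j s), ← mul_assoc,
      Finset.erase_insert (Finset.notMem_erase j s)]
    split_ifs <;> norm_num
  · rw [if_neg hs, key s hs]

/-- `(e_i · ω)_s = clSign i s · ω_{{i} ∆ s}`: for `i ∈ s` the wedge term contributes
`sgn i s · ω_{s ∖ {i}}`, otherwise the contraction term contributes `-sgn i s · ω_{s ∪ {i}}`. -/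
def clSign (i : Fin q) (s : Finset (Fin q)) : ℝ := (if i ∈ s then 1 else -1) * sgn i s

lemma clSign_mul_self (i : Fin q) (s : Finset (Fin q)) : clSign i s * clSign i s = 1 := by
  have := sgn_mul_self i s
  unfold clSign
  split_ifs <;> linear_combination this

lemma clSign_single_symmDiff_of_ne {i j : Fin q} (h : i ≠ j) (s : Finset (Fin q)) :
    clSign j ({i} ∆ s) = (if i < j then -1 else 1) * clSign j s := by
  have hmem : j ∈ {i} ∆ s ↔ j ∈ s := by simp [Finset.mem_symmDiff, Ne.symm h]
  unfold clSign
  rw [sgn_single_symmDiff, if_congr hmem rfl rfl]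
  ring

def clE (i : Fin q) : Module.End ℝ (Ext q) where
  toFun ω s := clSign i s * ω ({i} ∆ s)
  map_add' _ _ := funext fun _ => mul_add _ _ _
  map_smul' _ _ := funext fun _ => mul_left_comm _ _ _

lemma clE_apply (i : Fin q) (ω : Ext q) (s : Finset (Fin q)) :
    clE i ω s = clSign i s * ω ({i} ∆ s) := rfl

lemma clV_eB (i : Fin q) (ω : Ext q) : clV (eB i) ω = clE i ω := by
  have hw : wV (eB i) ω = wB i ω := by simp [wV, eB, Pi.single_apply]
  have hi : iV (eB i) ω = iB i ω := by simp [iV, eB, Pi.single_apply]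
  funext s
  rw [clV, hw, hi, Pi.sub_apply, wB, iB, clE_apply, clSign, single_symmDiff]
  by_cases hs : i ∈ s
  · have := sgn_single_symmDiff i i s
    rw [single_symmDiff, if_pos hs, if_neg (lt_irrefl i), one_mul] at this
    simp [hs, this]
  · simp [hs]

lemma clE_mul_clE_of_ne {i j : Fin q} (h : i ≠ j) : clE i * clE j = -(clE j * clE i) := by
  refine LinearMap.ext fun ω => funext fun s => ?_
  simp only [Module.End.mul_apply, LinearMap.neg_apply, Pi.neg_apply, clE_apply,
    clSign_single_symmDiff_of_ne h, clSign_single_symmDiff_of_ne h.symm, symmDiff_left_comm]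
  rcases h.lt_or_gt with hij | hij
  · rw [if_pos hij, if_neg hij.not_gt]; ring
  · rw [if_neg hij.not_gt, if_pos hij]; ring

lemma clE_bF (i : Fin q) (t : Finset (Fin q)) :
    clE i (bF t) = clSign i ({i} ∆ t) • bF ({i} ∆ t) := by
  ext s
  simp only [clE_apply, bF, Pi.smul_apply, smul_eq_mul]
  by_cases hs : s = {i} ∆ t
  · simp [hs]
  · rw [if_neg (fun h => hs (by rw [← h, symmDiff_symmDiff_cancel_left])), if_neg hs, mul_zero,
      mul_zero]

lemma ip_clE_clE (i : Fin q) (φ ψ : Ext q) : ip (clE i φ) (clE i ψ) = ip φ ψ := by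
  let σ : Finset (Fin q) ≃ Finset (Fin q) :=
    ⟨({i} ∆ ·), ({i} ∆ ·), symmDiff_symmDiff_cancel_left _, symmDiff_symmDiff_cancel_left _⟩
  unfold ip
  refine Fintype.sum_equiv σ _ _ fun s => ?_
  simp only [clE_apply, σ, Equiv.coe_fn_mk]
  linear_combination φ ({i} ∆ s) * ψ ({i} ∆ s) * clSign_mul_self i s

def clL (l : List (Fin q)) : Module.End ℝ (Ext q) := (l.map clE).prod

lemma clB_eq_clL (s : Finset (Fin q)) (ω : Ext q) : clB s ω = clL (Finset.sort s (· ≤ ·)) ω := by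
  have hfun : (fun i τ => clV (eB i) τ) = fun i (τ : Ext q) => clE i τ :=
    funext fun i => funext (clV_eB i)
  rw [clB, hfun, clL]
  induction Finset.sort s (· ≤ ·) with
  | nil => rfl
  | cons i l ih => simp [ih]

lemma ip_clL_clL (l : List (Fin q)) (φ ψ : Ext q) : ip (clL l φ) (clL l ψ) = ip φ ψ := by
  induction l with
  | nil => rfl
  | cons i l ih => simp [clL, ip_clE_clE, ← ih]

-- `l.length + l.count i` has the parity of the number of entries `≠ i`, each of which
-- anticommutes with `e_i`.
lemma clL_mul_clE (l : List (Fin q)) (i : Fin q) :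
    clL l * clE i = (-1 : ℝ) ^ (l.length + l.count i) • (clE i * clL l) := by
  induction l with
  | nil => simp [clL]
  | cons k l ih =>
    have hcons : clL (k :: l) = clE k * clL l := List.prod_cons
    rw [hcons, mul_assoc, ih, mul_smul_comm, ← mul_assoc, List.length_cons, List.count_cons]
    by_cases hk : k = i
    · subst hk
      rw [mul_assoc]
      congr 1
      simp only [beq_self_eq_true, if_true]
      ring
    · rw [clE_mul_clE_of_ne hk, show -(clE i * clE k) * clL l = -(clE i * (clE k * clL l)) from
        LinearMap.ext fun _ => rfl, smul_neg, ← neg_smul]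
      congr 1
      simp only [beq_iff_eq, hk, if_false]
      ring

lemma clL_bF_empty (l : List (Fin q)) (hl : l.Pairwise (· < ·)) :
    clL l (bF ∅) = bF l.toFinset := by
  induction l with
  | nil => rfl
  | cons i l ih =>
    obtain ⟨hlt, hl⟩ := List.pairwise_cons.mp hl
    have hi : i ∉ l.toFinset := fun h => lt_irrefl i (hlt i (List.mem_toFinset.mp h))
    have hsgn : sgn i (insert i l.toFinset) = 1 := by
      rw [sgn, Finset.filter_eq_empty_iff.mpr, Finset.card_empty, pow_zero]
      simp only [Finset.mem_insert, List.mem_toFinset]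
      rintro j (rfl | hj)
      exacts [lt_irrefl j, (hlt j hj).not_gt]
    have hcons : clL (i :: l) (bF ∅) = clE i (clL l (bF ∅)) := rfl
    rw [hcons, ih hl, clE_bF, single_symmDiff, if_neg hi, clSign,
      if_pos (Finset.mem_insert_self _ _), hsgn, one_mul, one_smul, List.toFinset_cons]

lemma clB_bF_empty (s : Finset (Fin q)) : clB s (bF ∅) = bF s := by
  rw [clB_eq_clL, clL_bF_empty _ (Finset.sortedLT_sort s).pairwise, Finset.sort_toFinset]

lemma clB_clE (t : Finset (Fin q)) (i : Fin q) (φ : Ext q) :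
    clB t (clE i φ) = (-1 : ℝ) ^ (t.card + if i ∈ t then 1 else 0) • clE i (clB t φ) := by
  have hcount : (Finset.sort t (· ≤ ·)).count i = if i ∈ t then 1 else 0 := by
    simp [(Finset.sort_nodup t _).count]
  rw [clB_eq_clL, clB_eq_clL, ← Module.End.mul_apply, clL_mul_clE, Finset.length_sort, hcount]
  rfl

lemma clB_of_card_two {s : Finset (Fin q)} (hs : s.card = 2) :
    ∃ a b, a ≠ b ∧ s = {a, b} ∧ ∀ φ, clB s φ = clE a (clE b φ) := by
  obtain ⟨a, b, hab⟩ := List.length_eq_two.mp ((Finset.length_sort (s := s) (· ≤ ·)).trans hs)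
  have hnodup := Finset.sort_nodup s (· ≤ ·)
  rw [hab] at hnodup
  refine ⟨a, b, by simpa using hnodup, ?_, fun φ => ?_⟩
  · rw [← Finset.sort_toFinset s (· ≤ ·), hab]
    simp
  · rw [clB_eq_clL, hab]
    rfl

lemma card_pair_inter {a b : Fin q} (hab : a ≠ b) (t : Finset (Fin q)) :
    ({a, b} ∩ t).card = (if a ∈ t then 1 else 0) + (if b ∈ t then 1 else 0) := by
  by_cases ha : a ∈ t <;> by_cases hb : b ∈ t <;>
    simp [Finset.insert_inter_of_mem, Finset.insert_inter_of_notMem, ha, hb, hab]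

lemma clB_bF_comm_of_card_two {s : Finset (Fin q)} (hs : s.card = 2) (t : Finset (Fin q)) :
    clB t (bF s) = (-1 : ℝ) ^ (s ∩ t).card • clB s (bF t) := by
  obtain ⟨a, b, hab, rfl, hcl⟩ := clB_of_card_two hs
  rw [← clB_bF_empty {a, b}, hcl, hcl, clB_clE, clB_clE, map_smul, smul_smul, clB_bF_empty,
    card_pair_inter hab, ← pow_add]
  congr 1
  rw [show t.card + (if a ∈ t then 1 else 0) + (t.card + if b ∈ t then 1 else 0)
    = (if a ∈ t then 1 else 0) + (if b ∈ t then 1 else 0) + 2 * t.card by ring, pow_add, pow_mul]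
  norm_num

lemma clM_bF_left (s : Finset (Fin q)) (ω : Ext q) : clM (bF s) ω = clB s ω := by
  rw [clM, Finset.sum_eq_single s (fun t _ ht => by simp [bF, ht]) (by simp)]
  simp [bF]

lemma brkt_bF_of_card_two {s : Finset (Fin q)} (hs : s.card = 2) (ω : Ext q) :
    brkt (bF s) ω = clB s (fun t => (1 - (-1) ^ (s ∩ t).card) * ω t) := by
  have hlin : ∀ φ, clB s φ = clL (Finset.sort s (· ≤ ·)) φ := clB_eq_clL s
  have hright : clM ω (bF s) = clB s (fun t => (-1) ^ (s ∩ t).card * ω t) := by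
    simp only [clM, clB_bF_comm_of_card_two hs, smul_smul, hlin, ← map_smul, ← map_sum]
    conv_rhs => rw [← sum_smul_bF (fun t => (-1) ^ (s ∩ t).card * ω t)]
    simp only [mul_comm]
  simp only [brkt, clM_bF_left, hright, hlin, ← map_sub]
  congr 1
  ext t
  show ω t - (-1) ^ (s ∩ t).card * ω t = _
  ring

lemma ip_brkt_bF_self_of_card_two {s : Finset (Fin q)} (hs : s.card = 2) (ω : Ext q) :
    ip (brkt (bF s) ω) (brkt (bF s) ω) = ∑ t, (if (s ∩ t).card = 1 then 4 else 0) * ω t ^ 2 := by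
  rw [brkt_bF_of_card_two hs, clB_eq_clL, ip_clL_clL, ip]
  refine Finset.sum_congr rfl fun t _ => ?_
  have hle : (s ∩ t).card ≤ 2 := hs ▸ Finset.card_le_card Finset.inter_subset_left
  interval_cases (s ∩ t).card <;> norm_num
  ring

lemma card_filter_card_inter_eq_one (t : Finset (Fin q)) :
    ((twoSets q).filter fun s => (s ∩ t).card = 1).card = t.card * tᶜ.card := by
  rw [← Finset.card_product]
  symm
  refine Finset.card_bij (fun x _ => {x.1, x.2}) ?_ ?_ ?_
  · rintro ⟨x, y⟩ hxy
    simp only [Finset.mem_product, Finset.mem_compl] at hxy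
    have hne : x ≠ y := fun h => hxy.2 (h ▸ hxy.1)
    simp [twoSets, Finset.card_pair hne, hxy.1, hxy.2]
  · rintro ⟨x, y⟩ hxy ⟨x', y'⟩ hxy' h
    simp only [Finset.mem_product, Finset.mem_compl] at hxy hxy'
    have hx' : x' ∈ ({x, y} : Finset (Fin q)) := h ▸ Finset.mem_insert_self x' {y'}
    have hy' : y' ∈ ({x, y} : Finset (Fin q)) := h ▸ by simp
    simp only [Finset.mem_insert, Finset.mem_singleton] at hx' hy'
    rcases hx' with rfl | rfl
    · rcases hy' with rfl | rfl
      · exact absurd hxy.1 hxy'.2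
      · rfl
    · exact absurd hxy'.1 hxy.2
  · intro s hs
    rw [Finset.mem_filter, mem_twoSets] at hs
    obtain ⟨x, y, hne, rfl⟩ := Finset.card_eq_two.mp hs.1
    have h1 := hs.2
    rw [card_pair_inter hne] at h1
    by_cases hx : x ∈ t <;> by_cases hy : y ∈ t <;> norm_num [hx, hy] at h1
    · exact ⟨(x, y), by simp [hx, hy], rfl⟩
    · exact ⟨(y, x), by simp [hx, hy], Finset.pair_comm y x⟩

lemma sum_ip_brkt_bF_self {p : ℕ} {ω : Ext q} (hω : homog p ω) :
    ∑ s ∈ twoSets q, ip (brkt (bF s) ω) (brkt (bF s) ω) = 4 * (p * (q - p)) * ip ω ω := by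
  rw [Finset.sum_congr rfl fun s hs => ip_brkt_bF_self_of_card_two (mem_twoSets.mp hs) ω,
    Finset.sum_comm, ip, Finset.mul_sum]
  refine Finset.sum_congr rfl fun t _ => ?_
  rw [← Finset.sum_mul, Finset.sum_ite, Finset.sum_const_zero, add_zero, Finset.sum_const,
    card_filter_card_inter_eq_one, nsmul_eq_mul]
  by_cases ht : t.card = p
  · have hle : t.card ≤ q := t.card_le_univ.trans_eq (Fintype.card_fin q)
    rw [Finset.card_compl, Fintype.card_fin, Nat.cast_mul, Nat.cast_sub hle, ht]
    ring
  · rw [hω t ht]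
    ring

section Spectral

variable {ι : Type*} [Fintype ι] [DecidableEq ι]

lemma posSemidef_of_eigenvalue_nonneg {A : Matrix ι ι ℝ} (hA : A.IsHermitian)
    (h : ∀ (μ : ℝ) (v : ι → ℝ), v ≠ 0 → A *ᵥ v = μ • v → 0 ≤ μ) : A.PosSemidef := by
  refine hA.posSemidef_iff_eigenvalues_nonneg.mpr fun i => h _ _ ?_ (hA.mulVec_eigenvectorBasis i)
  intro h0
  exact hA.eigenvectorBasis.orthonormal.ne_zero i (by ext j; exact congrFun h0 j)

lemma dotProduct_mulVec_bounds {A : Matrix ι ι ℝ} (hA : A.IsHermitian) {γ₀ γ₁ : ℝ}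
    (hev : ∀ (μ : ℝ) (v : ι → ℝ), v ≠ 0 → A *ᵥ v = μ • v → γ₀ ≤ μ ∧ μ ≤ γ₁) (x : ι → ℝ) :
    γ₀ * (x ⬝ᵥ x) ≤ x ⬝ᵥ (A *ᵥ x) ∧ x ⬝ᵥ (A *ᵥ x) ≤ γ₁ * (x ⬝ᵥ x) := by
  have hshift : ∀ (c μ : ℝ) (v : ι → ℝ), (A - c • 1) *ᵥ v = μ • v ↔ A *ᵥ v = (μ + c) • v := by
    intro c μ v
    rw [Matrix.sub_mulVec, Matrix.smul_mulVec, Matrix.one_mulVec, sub_eq_iff_eq_add, add_smul]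
  have hlow : (A - γ₀ • 1).PosSemidef :=
    posSemidef_of_eigenvalue_nonneg (hA.sub (Matrix.isHermitian_one.smul (IsSelfAdjoint.all γ₀)))
      fun μ v hv h => by linarith [(hev _ v hv ((hshift γ₀ μ v).mp h)).1]
  have hup : (γ₁ • 1 - A).PosSemidef := by
    refine posSemidef_of_eigenvalue_nonneg
      ((Matrix.isHermitian_one.smul (IsSelfAdjoint.all γ₁)).sub hA) fun μ v hv h => ?_
    have hA' : A *ᵥ v = (-μ + γ₁) • v := by
      rw [← hshift, ← neg_sub, Matrix.neg_mulVec, h, neg_smul]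
    linarith [(hev _ v hv hA').2]
  have h₀ := hlow.dotProduct_mulVec_nonneg x
  have h₁ := hup.dotProduct_mulVec_nonneg x
  simp only [star_trivial, Matrix.sub_mulVec, Matrix.smul_mulVec, Matrix.one_mulVec,
    dotProduct_sub, dotProduct_smul, smul_eq_mul] at h₀ h₁
  constructor <;> linarith

end Spectral

lemma homog_bF_of_mem_twoSets {s : Finset (Fin q)} (hs : s ∈ twoSets q) : homog 2 (bF s) := by
  intro t ht
  simp [bF, show t ≠ s from fun h => ht (h ▸ mem_twoSets.mp hs)]

def twoFormMatrix (R : Ext q →ₗ[ℝ] Ext q) : Matrix (twoSets q) (twoSets q) ℝ :=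
  Matrix.of fun s t => ip (R (bF s)) (bF t)

lemma isHermitian_twoFormMatrix {R : Ext q →ₗ[ℝ] Ext q}
    (hsym : ∀ a b : Ext q, homog 2 a → homog 2 b → ip (R a) b = ip a (R b)) :
    (twoFormMatrix R).IsHermitian := by
  refine Matrix.IsHermitian.ext fun s t => ?_
  simp only [twoFormMatrix, Matrix.of_apply, star_trivial]
  rw [hsym _ _ (homog_bF_of_mem_twoSets t.2) (homog_bF_of_mem_twoSets s.2), ip_comm]

def twoFormOf (v : twoSets q → ℝ) : Ext q := fun s => if h : s ∈ twoSets q then v ⟨s, h⟩ else 0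

lemma homog_twoFormOf (v : twoSets q → ℝ) : homog 2 (twoFormOf v) := fun _ hs =>
  dif_neg (fun h => hs (mem_twoSets.mp h))

lemma twoFormOf_ne_zero {v : twoSets q → ℝ} (hv : v ≠ 0) : twoFormOf v ≠ 0 := by
  intro h
  refine hv (funext fun s => ?_)
  simpa [twoFormOf] using congrFun h s

lemma ip_twoFormOf (v : twoSets q → ℝ) (φ : Ext q) : ip (twoFormOf v) φ = ∑ s, v s * φ s := by
  rw [ip, ← Finset.sum_subset (Finset.subset_univ (twoSets q)) fun _ _ hs => by
    simp [twoFormOf, hs], ← Finset.sum_coe_sort]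
  simp [twoFormOf]

lemma apply_twoFormOf_of_eigenvector {R : Ext q →ₗ[ℝ] Ext q}
    (hR2 : ∀ η : Ext q, homog 2 η → homog 2 (R η))
    (hsym : ∀ a b : Ext q, homog 2 a → homog 2 b → ip (R a) b = ip a (R b))
    {μ : ℝ} {v : twoSets q → ℝ} (hv : twoFormMatrix R *ᵥ v = μ • v) :
    R (twoFormOf v) = μ • twoFormOf v := by
  funext u
  by_cases hu : u ∈ twoSets q
  · have := congrFun hv ⟨u, hu⟩
    simp only [Matrix.mulVec, dotProduct, twoFormMatrix, Matrix.of_apply, ip_bF,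
      Pi.smul_apply, smul_eq_mul] at this
    rw [← ip_bF (R (twoFormOf v)) u, hsym _ _ (homog_twoFormOf v) (homog_bF_of_mem_twoSets hu),
      ip_twoFormOf, Pi.smul_apply, smul_eq_mul, twoFormOf, dif_pos hu, ← this]
    exact Finset.sum_congr rfl fun _ _ => mul_comm _ _
  · have hu2 : u.card ≠ 2 := fun h => hu (mem_twoSets.mpr h)
    rw [hR2 _ (homog_twoFormOf v) u hu2, Pi.smul_apply, homog_twoFormOf v u hu2, smul_zero]

def brktCoeff (ω : Ext q) (u : Finset (Fin q)) : twoSets q → ℝ := fun s => brkt (bF s) ω u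

lemma Bform_self_eq (R : Ext q →ₗ[ℝ] Ext q) (ω : Ext q) :
    Bform R ω ω = 1 / 4 * ∑ u, brktCoeff ω u ⬝ᵥ (twoFormMatrix R *ᵥ brktCoeff ω u) := by
  simp only [Bform, ip, brktCoeff, Matrix.mulVec, dotProduct, twoFormMatrix, Matrix.of_apply,
    ← Finset.sum_coe_sort (twoSets q) (M := ℝ), Finset.mul_sum]
  conv_rhs => rw [Finset.sum_comm]; enter [2, s]; rw [Finset.sum_comm]
  exact Finset.sum_congr rfl fun s _ => Finset.sum_congr rfl fun t _ =>
    Finset.sum_congr rfl fun u _ => by ring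

lemma sum_brktCoeff_dotProduct_self (ω : Ext q) :
    ∑ u, brktCoeff ω u ⬝ᵥ brktCoeff ω u = ∑ s ∈ twoSets q, ip (brkt (bF s) ω) (brkt (bF s) ω) := by
  simp only [dotProduct, brktCoeff, ip, ← Finset.sum_coe_sort (twoSets q) (M := ℝ)]
  exact Finset.sum_comm

theorem statement_4_general {q p : ℕ} (γ₀ γ₁ : ℝ) (R : Ext q →ₗ[ℝ] Ext q)
    (hR2 : ∀ η : Ext q, homog 2 η → homog 2 (R η))
    (hsym : ∀ a b : Ext q, homog 2 a → homog 2 b → ip (R a) b = ip a (R b))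
    (hev : ∀ (μ : ℝ) (η : Ext q), homog 2 η → η ≠ 0 → R η = μ • η → γ₀ ≤ μ ∧ μ ≤ γ₁)
    (ω : Ext q) (hω : homog p ω) :
    (p : ℝ) * ((q : ℝ) - (p : ℝ)) * γ₀ * ip ω ω ≤ Bform R ω ω ∧
      Bform R ω ω ≤ (p : ℝ) * ((q : ℝ) - (p : ℝ)) * γ₁ * ip ω ω := by
  have hspec : ∀ (μ : ℝ) (v : twoSets q → ℝ), v ≠ 0 → twoFormMatrix R *ᵥ v = μ • v →
      γ₀ ≤ μ ∧ μ ≤ γ₁ := fun μ v hv h =>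
    hev μ _ (homog_twoFormOf v) (twoFormOf_ne_zero hv) (apply_twoFormOf_of_eigenvector hR2 hsym h)
  have hbound := fun u =>
    dotProduct_mulVec_bounds (isHermitian_twoFormMatrix hsym) hspec (brktCoeff ω u)
  have hnorm : ∑ u, brktCoeff ω u ⬝ᵥ brktCoeff ω u = 4 * (p * (q - p)) * ip ω ω := by
    rw [sum_brktCoeff_dotProduct_self, sum_ip_brkt_bF_self hω]
  have hlow := Finset.sum_le_sum fun u (_ : u ∈ Finset.univ) => (hbound u).1
  have hupp := Finset.sum_le_sum fun u (_ : u ∈ Finset.univ) => (hbound u).2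
  rw [← Finset.mul_sum, hnorm] at hlow hupp
  rw [Bform_self_eq]
  constructor <;> linarith

/-- Inequality (3.6) of the paper. If `R` is a symmetric endomorphism of
`Λ²V` all of whose eigenvalues lie in `[γ₀, γ₁]`, then for every `1 ≤ p ≤ q−1` and every
`p`-form `ω`, `p(q−p)γ₀|ω|² ≤ ⟨B_R^{[p]}ω, ω⟩ ≤ p(q−p)γ₁|ω|²`. -/
theorem statement_4 {q p : ℕ} (hq : 1 ≤ q) (γ₀ γ₁ : ℝ) (R : Ext q →ₗ[ℝ] Ext q)
    (hR2 : ∀ η : Ext q, homog 2 η → homog 2 (R η))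
    (hsym : ∀ a b : Ext q, homog 2 a → homog 2 b → ip (R a) b = ip a (R b))
    (hev : ∀ (μ : ℝ) (η : Ext q), homog 2 η → η ≠ 0 → R η = μ • η → γ₀ ≤ μ ∧ μ ≤ γ₁)
    (hp1 : 1 ≤ p) (hpq : p ≤ q - 1)
    (ω : Ext q) (hω : homog p ω) :
    (p : ℝ) * ((q : ℝ) - (p : ℝ)) * γ₀ * ip ω ω ≤ Bform R ω ω ∧
      Bform R ω ω ≤ (p : ℝ) * ((q : ℝ) - (p : ℝ)) * γ₁ * ip ω ω :=
  statement_4_general γ₀ γ₁ R hR2 hsym hev ω hω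

end
end Paper
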